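/- The center of K is exactly the subgroup of K generated by z. -/

import Mathlib

/-- Generators of the group `H`: `x i`, `y i` for `i : Fin 18`, and `z`. -/
inductive HGen : Type
  | x : Fin 18 → HGen
  | y : Fin 18 → HGen
  | z : HGen

/-- The free-group generator corresponding to `x i`. -/
def fx (i : Fin 18) : FreeGroup HGen := FreeGroup.of (HGen.x i)
/-- The free-group generator corresponding to `y i`. -/
def fy (i : Fin 18) : FreeGroup HGen := FreeGroup.of (HGen.y i)
/-- The free-group generator corresponding to `z`. -/
def fz : FreeGroup HGen := FreeGroup.of HGen.z

/-- The relations of the presentation of `H`: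
`[xᵢ, xⱼ] = [yᵢ, yⱼ] = [xᵢ, yⱼ] = 1` for `i ≠ j`, `[xᵢ, yᵢ] = z`,
and `z` commutes with all the generators. -/
def HRels : Set (FreeGroup HGen) :=
  { r | (∃ i j : Fin 18, i ≠ j ∧ r = fx i * fx j * (fx i)⁻¹ * (fx j)⁻¹)
      ∨ (∃ i j : Fin 18, i ≠ j ∧ r = fy i * fy j * (fy i)⁻¹ * (fy j)⁻¹)
      ∨ (∃ i j : Fin 18, i ≠ j ∧ r = fx i * fy j * (fx i)⁻¹ * (fy j)⁻¹)
      ∨ (∃ i : Fin 18, r = fx i * fy i * (fx i)⁻¹ * (fy i)⁻¹ * fz⁻¹)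
      ∨ (∃ i : Fin 18, r = fx i * fz * (fx i)⁻¹ * fz⁻¹)
      ∨ (∃ i : Fin 18, r = fy i * fz * (fy i)⁻¹ * fz⁻¹) }

/-- The group `H`, given by the above presentation. -/
abbrev Hgrp : Type := PresentedGroup HRels

/-- The generator `xᵢ` of `H`. -/
def xH (i : Fin 18) : Hgrp := PresentedGroup.of (HGen.x i)
/-- The generator `yᵢ` of `H`. -/
def yH (i : Fin 18) : Hgrp := PresentedGroup.of (HGen.y i)
/-- The generator `z` of `H`. -/
def zH : Hgrp := PresentedGroup.of HGen.z


/-!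
`H` is the integer Heisenberg group: it maps to the explicit model on `ℤ¹⁸ × ℤ¹⁸ × ℤ` with
`(a, b, c) * (a', b', c') = (a + a', b + b', c + c' - b ⬝ a')`, and the normal form
`(a, b, c) ↦ x^a y^b z^c` is a left inverse of this map, which only has to be checked against
right multiplication by generators. In the model, `g` commutes with `(eᵢ - eⱼ, 0, 0)` iff
`bᵢ = bⱼ`, so an element central in `K` has constant vectors `a` and `b`; lying in `K` makes
their sums vanish, hence `a = b = 0` and the element is a power of `z`.
-/

open scoped commutatorElement

@[ext]
structure Heis (ι : Type*) where
  a : ι → ℤ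
  b : ι → ℤ
  c : ℤ

namespace Heis

variable {ι : Type*}

instance : One (Heis ι) := ⟨⟨0, 0, 0⟩⟩

@[simp] lemma one_a : (1 : Heis ι).a = 0 := rfl
@[simp] lemma one_b : (1 : Heis ι).b = 0 := rfl
@[simp] lemma one_c : (1 : Heis ι).c = 0 := rfl

variable [Fintype ι]

instance : Mul (Heis ι) := ⟨fun g h => ⟨g.a + h.a, g.b + h.b, g.c + h.c - g.b ⬝ᵥ h.a⟩⟩
instance : Inv (Heis ι) := ⟨fun g => ⟨-g.a, -g.b, -g.c - g.b ⬝ᵥ g.a⟩⟩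

@[simp] lemma mul_a (g h : Heis ι) : (g * h).a = g.a + h.a := rfl
@[simp] lemma mul_b (g h : Heis ι) : (g * h).b = g.b + h.b := rfl
@[simp] lemma mul_c (g h : Heis ι) : (g * h).c = g.c + h.c - g.b ⬝ᵥ h.a := rfl
@[simp] lemma inv_a (g : Heis ι) : g⁻¹.a = -g.a := rfl
@[simp] lemma inv_b (g : Heis ι) : g⁻¹.b = -g.b := rfl
@[simp] lemma inv_c (g : Heis ι) : g⁻¹.c = -g.c - g.b ⬝ᵥ g.a := rfl

instance : Group (Heis ι) where
  mul_assoc g h k := by ext <;> simp [dotProduct_add, add_dotProduct] <;> ring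
  one_mul g := by ext <;> simp
  mul_one g := by ext <;> simp
  inv_mul_cancel g := by ext <;> simp; ring

lemma commutatorElement_eq (g h : Heis ι) :
    ⁅g, h⁆ = (⟨0, 0, h.b ⬝ᵥ g.a - g.b ⬝ᵥ h.a⟩ : Heis ι) := by
  ext <;> simp [commutatorElement_def, add_dotProduct]; ring

lemma commute_iff {g h : Heis ι} : Commute g h ↔ g.b ⬝ᵥ h.a = h.b ⬝ᵥ g.a := by
  rw [← commutatorElement_eq_one_iff_commute, commutatorElement_eq, Heis.ext_iff]
  simp [sub_eq_zero, eq_comm]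

def degree : Heis ι →* Multiplicative (ℤ × ℤ) where
  toFun g := .ofAdd (∑ i, g.a i, ∑ i, g.b i)
  map_one' := by simp
  map_mul' g h := by simp [Finset.sum_add_distrib]; rfl

end Heis

lemma eq_zero_of_forall_eq_of_sum_eq_zero {ι M : Type*} [Fintype ι] [AddCommMonoid M]
    [IsAddTorsionFree M] {v : ι → M} (hv : ∀ i j, v i = v j) (hsum : ∑ i, v i = 0) : v = 0 := by
  funext i
  have : Nonempty ι := ⟨i⟩
  rw [Finset.sum_congr rfl fun j _ => hv j i, Finset.sum_const, Finset.card_univ] at hsum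
  exact (nsmul_eq_zero_iff_right Fintype.card_ne_zero).mp hsum

def heisGen : HGen → Heis (Fin 18)
  | .x i => ⟨Pi.single i 1, 0, 0⟩
  | .y i => ⟨0, Pi.single i 1, 0⟩
  | .z => ⟨0, 0, 1⟩

lemma heisGen_rels : ∀ r ∈ HRels, FreeGroup.lift heisGen r = 1 := by
  rintro r (⟨i, j, hij, rfl⟩ | ⟨i, j, hij, rfl⟩ | ⟨i, j, hij, rfl⟩ | ⟨i, rfl⟩ | ⟨i, rfl⟩ |
    ⟨i, rfl⟩) <;>
    simp [← commutatorElement_def, fx, fy, fz, heisGen, Heis.commutatorElement_eq,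
      Heis.ext_iff, *]

def toHeis : Hgrp →* Heis (Fin 18) := PresentedGroup.toGroup heisGen_rels

@[simp] lemma toHeis_xH (i : Fin 18) : toHeis (xH i) = ⟨Pi.single i 1, 0, 0⟩ :=
  PresentedGroup.toGroup.of _
@[simp] lemma toHeis_yH (i : Fin 18) : toHeis (yH i) = ⟨0, Pi.single i 1, 0⟩ :=
  PresentedGroup.toGroup.of _
@[simp] lemma toHeis_zH : toHeis zH = ⟨0, 0, 1⟩ :=
  PresentedGroup.toGroup.of _

lemma commute_xH_xH (i j : Fin 18) : Commute (xH i) (xH j) := by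
  obtain rfl | hij := eq_or_ne i j
  · rfl
  · exact commutatorElement_eq_one_iff_commute.mp
      (PresentedGroup.one_of_mem (Or.inl ⟨i, j, hij, rfl⟩))

lemma commute_yH_yH (i j : Fin 18) : Commute (yH i) (yH j) := by
  obtain rfl | hij := eq_or_ne i j
  · rfl
  · exact commutatorElement_eq_one_iff_commute.mp
      (PresentedGroup.one_of_mem (Or.inr <| Or.inl ⟨i, j, hij, rfl⟩))

lemma commute_xH_yH {i j : Fin 18} (hij : i ≠ j) : Commute (xH i) (yH j) :=
  commutatorElement_eq_one_iff_commute.mp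
    (PresentedGroup.one_of_mem (Or.inr <| Or.inr <| Or.inl ⟨i, j, hij, rfl⟩))

lemma commutatorElement_xH_yH (i : Fin 18) : ⁅xH i, yH i⁆ = zH :=
  mul_inv_eq_one.mp (PresentedGroup.one_of_mem (Or.inr <| Or.inr <| Or.inr <| Or.inl ⟨i, rfl⟩))

lemma commute_zH (g : Hgrp) : Commute zH g := by
  suffices g ∈ Subgroup.centralizer {zH} from
    (Subgroup.mem_centralizer_singleton_iff.mp this).symm
  refine PresentedGroup.generated_by _ _ (fun s => ?_) g
  rw [Subgroup.mem_centralizer_singleton_iff]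
  rcases s with i | i | _
  · exact commutatorElement_eq_one_iff_commute.mp
      (PresentedGroup.one_of_mem (Or.inr <| Or.inr <| Or.inr <| Or.inr <| Or.inl ⟨i, rfl⟩))
  · exact commutatorElement_eq_one_iff_commute.mp
      (PresentedGroup.one_of_mem (Or.inr <| Or.inr <| Or.inr <| Or.inr <| Or.inr ⟨i, rfl⟩))
  · rfl

lemma semiconjBy_xH_yH (i : Fin 18) : SemiconjBy (xH i) (yH i) (yH i * zH) :=
  calc xH i * yH i = ⁅xH i, yH i⁆ * yH i * xH i := by group
    _ = yH i * zH * xH i := by rw [commutatorElement_xH_yH, (commute_zH _).eq]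

section zpowProd

variable {G ι : Type*} [Group G] [Fintype ι] (v : ι → G)
  (hv : Pairwise fun i j => Commute (v i) (v j))

def zpowProd (a : ι → ℤ) : G :=
  MonoidHom.noncommPiCoprod (fun i => zpowersHom G (v i))
    (fun _ _ hij _ _ => (hv hij).zpow_zpow _ _) (fun i => .ofAdd (a i))

lemma zpowProd_zero : zpowProd v hv 0 = 1 := map_one _

lemma zpowProd_add (a b : ι → ℤ) : zpowProd v hv (a + b) = zpowProd v hv a * zpowProd v hv b :=
  map_mul _ _ _

lemma zpowProd_single [DecidableEq ι] (i : ι) (n : ℤ) :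
    zpowProd v hv (Pi.single i n) = v i ^ n := by
  have : (fun j => Multiplicative.ofAdd ((Pi.single i n : ι → ℤ) j)) =
      Pi.mulSingle (M := fun _ => Multiplicative ℤ) i (.ofAdd n) := by
    funext j
    obtain rfl | hj := eq_or_ne j i <;> simp [*]
  rw [zpowProd, this]
  exact MonoidHom.noncommPiCoprod_mulSingle _ _ _

end zpowProd

lemma pairwise_commute_xH : Pairwise fun i j => Commute (xH i) (xH j) :=
  fun i j _ => commute_xH_xH i j

lemma pairwise_commute_yH : Pairwise fun i j => Commute (yH i) (yH j) :=
  fun i j _ => commute_yH_yH i j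

local notation "xPow" => zpowProd xH pairwise_commute_xH
local notation "yPow" => zpowProd yH pairwise_commute_yH

lemma semiconjBy_xH_yPow (i : Fin 18) (b : Fin 18 → ℤ) :
    SemiconjBy (xH i) (yPow b) (yPow b * zH ^ b i) := by
  induction b using Pi.single_induction with
  | zero => simp [zpowProd_zero, SemiconjBy]
  | add b b' hb hb' =>
    have hz : Commute (zH ^ b i) (yPow b') := (commute_zH _).zpow_left _
    rw [zpowProd_add, Pi.add_apply, zpow_add,
      show yPow b * yPow b' * (zH ^ b i * zH ^ b' i) = yPow b * zH ^ b i * (yPow b' * zH ^ b' i) by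
        rw [mul_assoc (yPow b) (zH ^ b i), ← mul_assoc (zH ^ b i), hz.eq]; group]
    exact hb.mul_right hb'
  | single j n =>
    rw [zpowProd_single]
    obtain rfl | hij := eq_or_ne i j
    · rw [Pi.single_eq_same, ← ((commute_zH _).symm).mul_zpow]
      exact (semiconjBy_xH_yH i).zpow_right n
    · rw [Pi.single_eq_of_ne hij, zpow_zero, mul_one]
      exact (commute_xH_yH hij).zpow_right n

lemma MonoidHom.leftInverse_of_closure_eq_top {G M : Type*} [Group G] [Monoid M] (φ : G →* M)
    (ψ : M → G) {S : Set G} (hS : Subgroup.closure S = ⊤) (hone : ψ 1 = 1)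
    (hψ : ∀ m, ∀ s ∈ S, ψ (m * φ s) = ψ m * s) : Function.LeftInverse ψ φ := by
  let H : Subgroup G :=
    { carrier := {g | ∀ m, ψ (m * φ g) = ψ m * g}
      one_mem' := fun m => by simp
      mul_mem' := fun {g h} hg hh m => by rw [map_mul, ← mul_assoc, hh, hg, mul_assoc]
      inv_mem' := fun {g} hg m => by
        rw [← mul_inv_cancel_right (ψ (m * φ g⁻¹)) g, ← hg, mul_assoc, ← map_mul, inv_mul_cancel,
          map_one, mul_one] }
  have hH : H = ⊤ := top_le_iff.mp (hS ▸ (Subgroup.closure_le H).mpr fun s hs m => hψ m s hs)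
  intro g
  simpa [hone] using (hH ▸ Subgroup.mem_top g : g ∈ H) 1

def ofHeis (g : Heis (Fin 18)) : Hgrp := xPow g.a * yPow g.b * zH ^ g.c

lemma ofHeis_mul_toHeis (g : Heis (Fin 18)) (s : HGen) :
    ofHeis (g * toHeis (.of s)) = ofHeis g * .of s := by
  rcases s with i | i | _
  · change ofHeis (g * toHeis (xH i)) = ofHeis g * xH i
    have hz (k : ℤ) : zH ^ k * xH i = xH i * zH ^ k := ((commute_zH _).zpow_left k).eq
    calc ofHeis (g * toHeis (xH i))
        = xPow g.a * (xH i * yPow g.b) * zH ^ (g.c - g.b i) := by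
          simp [ofHeis, zpowProd_add, zpowProd_single, dotProduct_single, mul_assoc]
      _ = xPow g.a * (yPow g.b * zH ^ g.b i * xH i) * zH ^ (g.c - g.b i) := by
          rw [(semiconjBy_xH_yPow i g.b).eq]
      _ = ofHeis g * xH i := by
          rw [ofHeis, mul_assoc (yPow g.b), hz, mul_assoc _ (zH ^ g.c), hz]
          group
  · change ofHeis (g * toHeis (yH i)) = ofHeis g * yH i
    simp [ofHeis, zpowProd_add, zpowProd_single, mul_assoc, ((commute_zH _).zpow_left _).eq]
  · change ofHeis (g * toHeis zH) = ofHeis g * zH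
    simp [ofHeis, zpow_add_one, mul_assoc]

lemma ofHeis_toHeis (g : Hgrp) : ofHeis (toHeis g) = g :=
  toHeis.leftInverse_of_closure_eq_top ofHeis (PresentedGroup.closure_range_of _)
    (by simp [ofHeis, zpowProd_zero]) (by rintro m _ ⟨s, rfl⟩; exact ofHeis_mul_toHeis m s) g

lemma mem_zpowers_zH_of_commute {g : Hgrp} (hdeg : Heis.degree (toHeis g) = 1)
    (hx : ∀ i j, Commute g (xH i * (xH j)⁻¹)) (hy : ∀ i j, Commute g (yH i * (yH j)⁻¹)) :
    g ∈ Subgroup.zpowers zH := by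
  set G := toHeis g
  have hb (i j : Fin 18) : G.b i = G.b j := by
    have := Heis.commute_iff.mp ((hx i j).map toHeis)
    simp at this
    linarith
  have ha (i j : Fin 18) : G.a i = G.a j := by
    have := Heis.commute_iff.mp ((hy i j).map toHeis)
    simp at this
    linarith
  have hsum : ∑ i, G.a i = 0 ∧ ∑ i, G.b i = 0 := by
    simpa [Heis.degree] using hdeg
  refine ⟨G.c, ?_⟩
  rw [← ofHeis_toHeis g, ofHeis, eq_zero_of_forall_eq_of_sum_eq_zero ha hsum.1,
    eq_zero_of_forall_eq_of_sum_eq_zero hb hsum.2, zpowProd_zero, zpowProd_zero, one_mul, one_mul]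

lemma eq_degree_comp_toHeis {ab : Hgrp →* Multiplicative (ℤ × ℤ)}
    (habx : ∀ i, ab (xH i) = .ofAdd (1, 0)) (haby : ∀ i, ab (yH i) = .ofAdd (0, 1))
    (habz : ab zH = 1) : ab = Heis.degree.comp toHeis := by
  refine PresentedGroup.ext fun s => ?_
  rcases s with i | i | _
  · change ab (xH i) = Heis.degree (toHeis (xH i))
    simp [habx, Heis.degree]
  · change ab (yH i) = Heis.degree (toHeis (yH i))
    simp [haby, Heis.degree]
  · change ab zH = Heis.degree (toHeis zH)
    simp [habz, Heis.degree]
    rfl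

/-- The center of `K = ker(ab)` is exactly the subgroup of `K` generated
by `z`. -/
theorem stmt13 (ab : Hgrp →* Multiplicative (ℤ × ℤ))
    (habx : ∀ i : Fin 18, ab (xH i) = Multiplicative.ofAdd (1, 0))
    (haby : ∀ i : Fin 18, ab (yH i) = Multiplicative.ofAdd (0, 1))
    (habz : ab zH = 1) :
    ∃ hzK : zH ∈ ab.ker,
      Subgroup.center ↥ab.ker = Subgroup.closure {(⟨zH, hzK⟩ : ↥ab.ker)} := by
  have hzK : zH ∈ ab.ker := habz
  refine ⟨hzK, le_antisymm (fun g hg => ?_) ?_⟩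
  · have hcomm (k : Hgrp) (hk : k ∈ ab.ker) : Commute (g : Hgrp) k :=
      (congrArg Subtype.val (Subgroup.mem_center_iff.mp hg ⟨k, hk⟩)).symm
    have hdeg : Heis.degree (toHeis g) = 1 := by
      rw [← MonoidHom.comp_apply, ← eq_degree_comp_toHeis habx haby habz]
      exact g.2
    obtain ⟨c, hc⟩ := mem_zpowers_zH_of_commute hdeg
      (fun i j => hcomm _ (by simp [habx])) (fun i j => hcomm _ (by simp [haby]))
    exact Subgroup.mem_closure_singleton.mpr ⟨c, Subtype.ext hc⟩
  · rw [Subgroup.closure_le, Set.singleton_subset_iff, SetLike.mem_coe, Subgroup.mem_center_iff]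
    exact fun k => Subtype.ext (commute_zH k).eq.symm
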